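/- Let 0 < μ < 1 < ν < 2, let α be real with |α| < 1, let b ∈ ℕ, and assume e_{ν-μ,ν}(α, b+2) ≠ 0, so that the Green's function G on {0, ..., b+3} × {1, ..., b+2} is defined. Let f : {1, ..., b+2} × ℝ → ℝ be continuous in its second variable and suppose (A1): there exist a nondecreasing function ψ : [0, ∞) → [0, ∞) and g : {1, ..., b+2} → [0, ∞) with |f(j, r)| ≤ g(j)·ψ(|r|) for all j and r. If lim_{L → ∞} L/ψ(L) = +∞ (i.e., for every C > 0 there is L₀ such that L > C·ψ(L) for all L ≥ L₀), then there exists Y : {0, ..., b+3} → ℝ with Y(0) = Y(b+3) = 0 satisfying -(g_Y(t+2) - 2 g_Y(t+1) + g_Y(t)) + α(W_Y(t+1) - W_Y(t)) = f(t+1, Y(t+1)) for all t ∈ {0, ..., b+1}; moreover, Y is not identically zero provided f(j, 0) ≠ 0 for at least one j ∈ {1, ..., b+2}. -/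

import Mathlib

/-- Generalized falling factorial `t^(ρ) = Γ(t+1)/Γ(t+1-ρ)` (equal to `0` when
`t+1-ρ` is a pole of `Γ`, by Mathlib's conventions). -/
noncomputable def ffact (t ρ : ℝ) : ℝ := Real.Gamma (t + 1) / Real.Gamma (t + 1 - ρ)

/-- `g_Y(t) = (1/Γ(2-ν)) ∑_{j=0}^{t} (t+1-ν-j)^(1-ν) Y(j)`, so that
`Δ^ν y(t) = g_Y(t+2) - 2g_Y(t+1) + g_Y(t)` (with `Y(n) = y(ν-2+n)`). -/
noncomputable def gY (ν : ℝ) (Y : ℕ → ℝ) (t : ℕ) : ℝ :=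
  (1 / Real.Gamma (2 - ν)) *
    ∑ j ∈ Finset.range (t + 1), ffact ((t : ℝ) + 1 - ν - (j : ℝ)) (1 - ν) * Y j

/-- `W_Y(t) = (1/Γ(1-μ)) ∑_{j=0}^{t} (t-μ-j)^(-μ) Y(j+1)`, so that
`Δ^μ y(t+ν-μ) = W_Y(t+1) - W_Y(t)` (with `Y(n) = y(ν-2+n)`). -/
noncomputable def WY (μ : ℝ) (Y : ℕ → ℝ) (t : ℕ) : ℝ :=
  (1 / Real.Gamma (1 - μ)) *
    ∑ j ∈ Finset.range (t + 1), ffact ((t : ℝ) - μ - (j : ℝ)) (-μ) * Y (j + 1)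

/-- Two-parameter delta discrete Mittag-Leffler function at an integer `n ≥ -1`:
`e_{a,b}(λ, n) = ∑_{k=0}^∞ λ^k (n + k a + b - 1)^(k a + b - 1)/Γ(k a + b)`; in
particular `e_{a,b}(λ, -1) = 0`. -/
noncomputable def mittagLeffler (a b lam : ℝ) (n : ℤ) : ℝ :=
  ∑' k : ℕ, lam ^ k * ffact ((n : ℝ) + (k : ℝ) * a + b - 1) ((k : ℝ) * a + b - 1) /
    Real.Gamma ((k : ℝ) * a + b)

/-- The Green's function of the Dirichlet problem, defined on
`{0,…,b+3} × {1,…,b+2}`: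
`G(n,j) = e_{ν-μ,ν}(α,n-1) e_{ν-μ,ν}(α,b+2-j)/e_{ν-μ,ν}(α,b+2) - e_{ν-μ,ν}(α,n-j-1)`
for `j ≤ n`, and
`G(n,j) = e_{ν-μ,ν}(α,n-1) e_{ν-μ,ν}(α,b+2-j)/e_{ν-μ,ν}(α,b+2)` for `j ≥ n+1`. -/
noncomputable def green (μ ν α : ℝ) (b : ℕ) (n j : ℕ) : ℝ :=
  if j ≤ n then
    mittagLeffler (ν - μ) ν α ((n : ℤ) - 1) * mittagLeffler (ν - μ) ν α ((b : ℤ) + 2 - j) /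
        mittagLeffler (ν - μ) ν α ((b : ℤ) + 2)
      - mittagLeffler (ν - μ) ν α ((n : ℤ) - (j : ℤ) - 1)
  else
    mittagLeffler (ν - μ) ν α ((n : ℤ) - 1) * mittagLeffler (ν - μ) ν α ((b : ℤ) + 2 - j) /
      mittagLeffler (ν - μ) ν α ((b : ℤ) + 2)


-- ===== auxiliary development =====


noncomputable def cc (X : ℝ) (n : ℕ) : ℝ :=
  Real.Gamma (n + X) / (Real.Gamma (n + 1) * Real.Gamma X)

lemma ccdef (X : ℝ) (n : ℕ) : cc X n = Real.Gamma (n + X) / (Real.Gamma (n + 1) * Real.Gamma X) :=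
  rfl

lemma cc_zero (n : ℕ) : cc 0 n = 0 := by simp [cc, Real.Gamma_zero]

lemma Gamma_np1_pos (n : ℕ) : 0 < Real.Gamma (n + 1) := by
  apply Real.Gamma_pos_of_pos; positivity

lemma cast_add_pos {X : ℝ} (hX : 0 < X) (n : ℕ) : 0 < (n : ℝ) + X := by
  have : (0:ℝ) ≤ (n : ℝ) := n.cast_nonneg
  linarith

lemma cc_nonneg {X : ℝ} (hX : 0 ≤ X) (n : ℕ) : 0 ≤ cc X n := by
  rcases eq_or_lt_of_le hX with h | h
  · rw [← h, cc_zero]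
  · have h1 : 0 < Real.Gamma ((n : ℝ) + X) := Real.Gamma_pos_of_pos (cast_add_pos h n)
    have h2 := Gamma_np1_pos n
    have h3 : 0 < Real.Gamma X := Real.Gamma_pos_of_pos h
    unfold cc
    exact div_nonneg h1.le (mul_nonneg h2.le h3.le)

lemma cc_zero_right {X : ℝ} (hX : 0 < X) : cc X 0 = 1 := by
  have h3 : Real.Gamma X ≠ 0 := (Real.Gamma_pos_of_pos hX).ne'
  simp [cc, Real.Gamma_one, h3]

lemma cc_succ {X : ℝ} (hX : 0 < X) (n : ℕ) :
    ((n : ℝ) + 1) * cc X (n + 1) = ((n : ℝ) + X) * cc X n := by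
  have h1 : Real.Gamma ((n : ℝ) + 1 + X) = ((n : ℝ) + X) * Real.Gamma (n + X) := by
    rw [show (n : ℝ) + 1 + X = ((n : ℝ) + X) + 1 by ring,
      Real.Gamma_add_one (cast_add_pos hX n).ne']
  have h2 : Real.Gamma ((n : ℝ) + 1 + 1) = ((n : ℝ) + 1) * Real.Gamma (n + 1) := by
    rw [Real.Gamma_add_one (by positivity : (n:ℝ) + 1 ≠ 0)]
  have h4 : Real.Gamma ((n : ℝ) + 1) ≠ 0 := (Gamma_np1_pos n).ne'
  have h5 : ((n : ℝ) + 1) ≠ 0 := by positivity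
  rcases eq_or_ne (Real.Gamma X) 0 with h3 | h3
  · simp [cc, h3]
  · unfold cc
    push_cast
    rw [h1, h2]
    field_simp

lemma cc_pascal {X : ℝ} (hX : 0 ≤ X) (n : ℕ) :
    cc (X + 1) (n + 1) - cc (X + 1) n = cc X (n + 1) := by
  rcases eq_or_lt_of_le hX with h | h
  · subst h
    have h1 : ∀ m : ℕ, cc (0 + 1 : ℝ) m = 1 := by
      intro m
      simp only [cc, zero_add, Real.Gamma_one, mul_one]
      rw [div_self (Gamma_np1_pos m).ne']
    rw [h1, h1, cc_zero]
    ring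
  · have h1 : Real.Gamma ((n:ℝ) + 1 + (X + 1)) = ((n : ℝ) + 1 + X) * Real.Gamma ((n : ℝ) + 1 + X) := by
      rw [show (n : ℝ) + 1 + (X + 1) = ((n : ℝ) + 1 + X) + 1 by ring]
      have : (0:ℝ) < (n:ℝ) + 1 + X := by
        have : (0:ℝ) ≤ (n : ℝ) := n.cast_nonneg
        linarith
      rw [Real.Gamma_add_one this.ne']
    have h2 : Real.Gamma ((n:ℝ) + 1 + 1) = ((n : ℝ) + 1) * Real.Gamma ((n:ℝ) + 1) := by
      rw [Real.Gamma_add_one (by positivity : (n:ℝ) + 1 ≠ 0)]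
    have h3 : Real.Gamma (X + 1) = X * Real.Gamma X := Real.Gamma_add_one h.ne'
    have hg1 : Real.Gamma ((n:ℝ) + 1) ≠ 0 := (Gamma_np1_pos n).ne'
    have hg2 : Real.Gamma X ≠ 0 := (Real.Gamma_pos_of_pos h).ne'
    have hg3 : ((n:ℝ) + 1) ≠ 0 := by positivity
    have hg4 : X ≠ 0 := h.ne'
    unfold cc
    push_cast
    rw [h1, h2, h3]
    field_simp
    ring

lemma vander {A B : ℝ} (hA : 0 < A) (hB : 0 < B) (m : ℕ) :
    ∑ j ∈ Finset.range (m + 1), cc B j * cc A (m - j) = cc (A + B) m := by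
  induction m with
  | zero => simp [cc_zero_right hA, cc_zero_right hB, cc_zero_right (by linarith : (0:ℝ) < A + B)]
  | succ m ih =>
    have hm1 : ((m : ℝ) + 1) ≠ 0 := by positivity
    have key : ((m : ℝ) + 1) * (∑ j ∈ Finset.range (m + 2), cc B j * cc A (m + 1 - j))
        = ((m : ℝ) + 1) * cc (A + B) (m + 1) := by
      have expand : ((m : ℝ) + 1) * (∑ j ∈ Finset.range (m + 2), cc B j * cc A (m + 1 - j))
          = (∑ j ∈ Finset.range (m + 2), (j : ℝ) * cc B j * cc A (m + 1 - j))
            + (∑ j ∈ Finset.range (m + 2), ((m + 1 - j : ℕ) : ℝ) * cc B j * cc A (m + 1 - j)) := by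
        rw [Finset.mul_sum, ← Finset.sum_add_distrib]
        apply Finset.sum_congr rfl
        intro j hj
        have hj' : j ≤ m + 1 := by
          have := Finset.mem_range.mp hj; omega
        have : ((m + 1 - j : ℕ) : ℝ) = (m : ℝ) + 1 - (j : ℝ) := by
          push_cast [Nat.cast_sub hj']; ring
        rw [this]; ring
      have T1 : (∑ j ∈ Finset.range (m + 2), (j : ℝ) * cc B j * cc A (m + 1 - j))
          = ∑ i ∈ Finset.range (m + 1), ((i : ℝ) + B) * cc B i * cc A (m - i) := by
        rw [Finset.sum_range_succ']
        have h0 : ((0:ℕ) : ℝ) * cc B 0 * cc A (m + 1 - 0) = 0 := by simp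
        rw [h0, add_zero]
        apply Finset.sum_congr rfl
        intro i hi
        have h1 : (m + 1 - (i + 1)) = m - i := by omega
        rw [h1]
        have h2 := cc_succ hB i
        push_cast
        rw [show ((i:ℝ) + 1) * cc B (i+1) * cc A (m - i)
            = (((i:ℝ) + 1) * cc B (i+1)) * cc A (m - i) by ring, h2]
        try ring
      have T2 : (∑ j ∈ Finset.range (m + 2), ((m + 1 - j : ℕ) : ℝ) * cc B j * cc A (m + 1 - j))
          = ∑ j ∈ Finset.range (m + 1), ((m : ℝ) - j + A) * cc B j * cc A (m - j) := by
        rw [Finset.sum_range_succ]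
        have h0 : ((m + 1 - (m+1) : ℕ) : ℝ) * cc B (m+1) * cc A (m + 1 - (m+1)) = 0 := by
          simp
        rw [h0, add_zero]
        apply Finset.sum_congr rfl
        intro j hj
        have hj' : j ≤ m := by have := Finset.mem_range.mp hj; omega
        have h1 : m + 1 - j = (m - j) + 1 := by omega
        rw [h1]
        have h2 := cc_succ hA (m - j)
        have hc : ((m - j : ℕ) : ℝ) = (m : ℝ) - (j : ℝ) := by
          push_cast [Nat.cast_sub hj']; ring
        have h4 : ((m - j + 1 : ℕ) : ℝ) = ((m - j : ℕ) : ℝ) + 1 := by push_cast; ring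
        rw [h4]
        rw [show (((m - j:ℕ):ℝ) + 1) * cc B j * cc A ((m-j) + 1)
            = ((((m - j:ℕ):ℝ) + 1) * cc A ((m-j) + 1)) * cc B j by ring, h2, hc]
        try ring
      rw [expand, T1, T2, ← Finset.sum_add_distrib]
      have hs : ∑ j ∈ Finset.range (m + 1),
          (((j : ℝ) + B) * cc B j * cc A (m - j) + ((m : ℝ) - j + A) * cc B j * cc A (m - j))
          = ((m : ℝ) + A + B) * ∑ j ∈ Finset.range (m + 1), cc B j * cc A (m - j) := by
        rw [Finset.mul_sum]
        apply Finset.sum_congr rfl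
        intro j hj; ring
      rw [hs, ih]
      have h2 := cc_succ (show (0:ℝ) < A + B by linarith) m
      linarith
    exact mul_left_cancel₀ hm1 key

lemma Gamma_add_nat_le {X : ℝ} (hX : 0 < X) (n : ℕ) :
    Real.Gamma ((n : ℝ) + X) ≤ (X + n) ^ n * Real.Gamma X := by
  induction n with
  | zero => simp
  | succ n ih =>
    have hnX : (0:ℝ) < (n : ℝ) + X := cast_add_pos hX n
    have hG : 0 < Real.Gamma X := Real.Gamma_pos_of_pos hX
    have h1 : Real.Gamma ((↑(n+1) : ℝ) + X) = ((n:ℝ) + X) * Real.Gamma ((n:ℝ) + X) := by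
      push_cast
      rw [show (n : ℝ) + 1 + X = ((n : ℝ) + X) + 1 by ring, Real.Gamma_add_one hnX.ne']
    rw [h1]
    have h2 : ((n:ℝ) + X) * Real.Gamma ((n:ℝ) + X) ≤ ((n:ℝ) + X) * ((X + n)^n * Real.Gamma X) :=
      mul_le_mul_of_nonneg_left ih hnX.le
    have h3 : ((n:ℝ) + X) * ((X + n)^n * Real.Gamma X) ≤ (X + ↑(n+1))^(n+1) * Real.Gamma X := by
      push_cast
      have e1 : (X + ((n:ℝ) + 1))^(n+1) = (X + (n:ℝ) + 1) * (X + (n:ℝ) + 1)^n := by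
        rw [pow_succ]; ring
      rw [e1]
      have e2 : ((n:ℝ) + X) ≤ X + (n:ℝ) + 1 := by linarith
      have e3 : (X + (n:ℝ))^n ≤ (X + (n:ℝ) + 1)^n :=
        pow_le_pow_left₀ (by linarith) (by linarith) n
      have e4 : (0:ℝ) ≤ (X + (n:ℝ))^n := pow_nonneg (by linarith) n
      have e5 : ((n:ℝ) + X) * (X + (n:ℝ))^n ≤ (X + (n:ℝ) + 1) * (X + (n:ℝ) + 1)^n :=
        mul_le_mul e2 e3 e4 (by linarith)
      calc ((n:ℝ) + X) * ((X + ↑n)^n * Real.Gamma X)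
          = (((n:ℝ) + X) * (X + ↑n)^n) * Real.Gamma X := by ring
        _ ≤ ((X + (n:ℝ) + 1) * (X + (n:ℝ) + 1)^n) * Real.Gamma X :=
            mul_le_mul_of_nonneg_right e5 hG.le
    push_cast at h2 h3 ⊢
    linarith

lemma cc_le {X : ℝ} (hX : 0 ≤ X) (n : ℕ) : cc X n ≤ (X + n) ^ n / (n.factorial : ℝ) := by
  rcases eq_or_lt_of_le hX with h | h
  · rw [← h, cc_zero]
    positivity
  · rw [ccdef]
    have hfac : Real.Gamma ((n:ℝ) + 1) = (n.factorial : ℝ) := Real.Gamma_nat_eq_factorial n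
    rw [hfac]
    have hG : 0 < Real.Gamma X := Real.Gamma_pos_of_pos h
    have hfp : (0:ℝ) < (n.factorial : ℝ) := by positivity
    rw [div_le_div_iff₀ (by positivity) hfp]
    have := Gamma_add_nat_le h n
    calc Real.Gamma ((n:ℝ) + X) * (n.factorial : ℝ)
        ≤ ((X + n)^n * Real.Gamma X) * (n.factorial : ℝ) := by
          apply mul_le_mul_of_nonneg_right this hfp.le
      _ = (X + n)^n * ((n.factorial:ℝ) * Real.Gamma X) := by ring

lemma summable_shift {r : ℝ} (hr0 : 0 ≤ r) (hr : r < 1) (n : ℕ) :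
    Summable (fun k : ℕ => ((k : ℝ) + 1) ^ n * r ^ k) := by
  have h1 : Summable (fun k : ℕ => (k : ℝ) ^ n * r ^ k) := by
    apply summable_pow_mul_geometric_of_norm_lt_one
    rwa [Real.norm_eq_abs, abs_of_nonneg hr0]
  have h2 : Summable (fun k : ℕ => (2:ℝ)^n * ((k : ℝ)^n * r^k) + r^k) :=
    (h1.mul_left _).add (summable_geometric_of_lt_one hr0 hr)
  apply Summable.of_nonneg_of_le _ _ h2
  · intro k; positivity
  · intro k
    have hrk : (0:ℝ) ≤ r^k := by positivity
    rcases Nat.eq_zero_or_pos k with hk | hk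
    · subst hk
      have hz : (0:ℝ) ≤ (2:ℝ)^n * (0:ℝ)^n := by positivity
      simp only [Nat.cast_zero, zero_add, one_pow, pow_zero, mul_one, one_mul]
      linarith
    · have : ((k:ℝ) + 1)^n ≤ (2:ℝ)^n * (k:ℝ)^n := by
        rw [← mul_pow]
        apply pow_le_pow_left₀ (by positivity)
        have : (1:ℝ) ≤ (k:ℝ) := by exact_mod_cast hk
        linarith
      calc ((k:ℝ)+1)^n * r^k ≤ ((2:ℝ)^n * (k:ℝ)^n) * r^k :=
            mul_le_mul_of_nonneg_right this hrk
        _ ≤ (2:ℝ)^n * ((k:ℝ)^n * r^k) + r^k := by nlinarith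

lemma summable_cc {r a X : ℝ} (hr : |r| < 1) (ha : 0 ≤ a) (hX : 0 ≤ X) (n : ℕ) :
    Summable (fun k : ℕ => r ^ k * cc ((k : ℝ) * a + X) n) := by
  have hmaj : Summable (fun k : ℕ => ((a + X + n)^n / (n.factorial : ℝ)) *
      (((k:ℝ) + 1)^n * |r|^k)) :=
    ((summable_shift (abs_nonneg r) hr n).mul_left _)
  apply Summable.of_norm_bounded hmaj
  intro k
  have hkaX : (0:ℝ) ≤ (k:ℝ) * a + X := by positivity
  have hcc := cc_nonneg hkaX n
  rw [Real.norm_eq_abs, abs_mul, abs_pow, abs_of_nonneg hcc]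
  have h1 : cc ((k:ℝ)*a + X) n ≤ (((k:ℝ)*a + X) + n)^n / (n.factorial : ℝ) := cc_le hkaX n
  have h2 : (((k:ℝ)*a + X) + n)^n ≤ ((k:ℝ)+1)^n * (a + X + n)^n := by
    rw [← mul_pow]
    apply pow_le_pow_left₀ (by positivity)
    have hk0 : (0:ℝ) ≤ (k:ℝ) := k.cast_nonneg
    nlinarith
  have hfp : (0:ℝ) < (n.factorial : ℝ) := by positivity
  have h3 : cc ((k:ℝ)*a + X) n ≤ ((k:ℝ)+1)^n * (a + X + n)^n / (n.factorial : ℝ) :=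
    h1.trans (div_le_div_of_nonneg_right h2 hfp.le)
  have hrk : (0:ℝ) ≤ |r|^k := by positivity
  calc |r|^k * cc ((k:ℝ)*a + X) n
      ≤ |r|^k * (((k:ℝ)+1)^n * (a + X + n)^n / (n.factorial : ℝ)) :=
        mul_le_mul_of_nonneg_left h3 hrk
    _ = ((a + X + n)^n / (n.factorial : ℝ)) * (((k:ℝ) + 1)^n * |r|^k) := by ring

noncomputable def Pg (a α X : ℝ) (n : ℕ) : ℝ := ∑' k : ℕ, α ^ k * cc ((k : ℝ) * a + X) n

lemma Pg_sub {a α X : ℝ} (hα : |α| < 1) (ha : 0 ≤ a) (hX : 0 ≤ X) (n : ℕ) :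
    Pg a α (X + 1) (n + 1) - Pg a α (X + 1) n = Pg a α X (n + 1) := by
  unfold Pg
  rw [← Summable.tsum_sub (summable_cc hα ha (by linarith) (n+1)) (summable_cc hα ha (by linarith) n)]
  apply tsum_congr
  intro k
  rw [← mul_sub]
  congr 1
  have h : (k:ℝ) * a + (X + 1) = ((k:ℝ)*a + X) + 1 := by ring
  rw [h]
  exact cc_pascal (by positivity) n

lemma Pg_zero_eq {a α X X' : ℝ} (ha : 0 ≤ a) (hX : 0 < X) (hX' : 0 < X') :
    Pg a α X 0 = Pg a α X' 0 := by
  unfold Pg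
  apply tsum_congr
  intro k
  rw [cc_zero_right (by positivity), cc_zero_right (by positivity)]

lemma Pg_shift {a α : ℝ} (hα : |α| < 1) (ha : 0 ≤ a) (m : ℕ) :
    α * Pg a α a m = Pg a α 0 m := by
  unfold Pg
  rw [← tsum_mul_left]
  have h0 : Pg a α 0 m = ∑' k : ℕ, α ^ k * cc ((k:ℝ) * a + 0) m := rfl
  rw [Summable.tsum_eq_zero_add (summable_cc hα ha le_rfl m)]
  simp only [pow_zero, Nat.cast_zero, zero_mul, one_mul, zero_add, cc_zero, add_zero]
  apply tsum_congr
  intro k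
  push_cast
  rw [show ((k:ℝ) + 1) * a = (k:ℝ) * a + a by ring]
  ring

noncomputable def Efun (μ ν α : ℝ) : ℕ → ℝ := fun j => if j = 0 then 0 else Pg (ν - μ) α ν (j - 1)

lemma ffact_g_eq {ν : ℝ} (hν2 : ν < 2) {t j : ℕ} (hj : j ≤ t) :
    ffact ((t : ℝ) + 1 - ν - (j : ℝ)) (1 - ν) = Real.Gamma (2 - ν) * cc (2 - ν) (t - j) := by
  unfold ffact
  rw [ccdef]
  have h1 : (t:ℝ) + 1 - ν - (j:ℝ) + 1 = ((t - j : ℕ) : ℝ) + (2 - ν) := by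
    push_cast [Nat.cast_sub hj]; ring
  have h2 : (t:ℝ) + 1 - ν - (j:ℝ) + 1 - (1 - ν) = ((t - j : ℕ) : ℝ) + 1 := by
    push_cast [Nat.cast_sub hj]; ring
  rw [h2, h1]
  have h3 : Real.Gamma (2 - ν) ≠ 0 := (Real.Gamma_pos_of_pos (by linarith)).ne'
  field_simp

lemma ffact_w_eq {μ : ℝ} (hμ1 : μ < 1) {t j : ℕ} (hj : j ≤ t) :
    ffact ((t : ℝ) - μ - (j : ℝ)) (-μ) = Real.Gamma (1 - μ) * cc (1 - μ) (t - j) := by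
  unfold ffact
  rw [ccdef]
  have h1 : (t:ℝ) - μ - (j:ℝ) + 1 = ((t - j : ℕ) : ℝ) + (1 - μ) := by
    push_cast [Nat.cast_sub hj]; ring
  have h2 : (t:ℝ) - μ - (j:ℝ) + 1 - (-μ) = ((t - j : ℕ) : ℝ) + 1 := by
    push_cast [Nat.cast_sub hj]; ring
  rw [h2, h1]
  have h3 : Real.Gamma (1 - μ) ≠ 0 := (Real.Gamma_pos_of_pos (by linarith)).ne'
  field_simp

lemma gY_Efun_zero (μ ν α : ℝ) : gY ν (Efun μ ν α) 0 = 0 := by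
  simp [gY, Efun]

lemma gY_Efun {μ ν α : ℝ} (hμ0 : 0 < μ) (hμ1 : μ < 1) (hν1 : 1 < ν) (hν2 : ν < 2)
    (hα : |α| < 1) (t : ℕ) :
    gY ν (Efun μ ν α) (t + 1) = Pg (ν - μ) α 2 t := by
  set a := ν - μ with ha_def
  have ha : 0 < a := by simp [ha_def]; linarith
  have hA : 0 < 2 - ν := by linarith
  have hΓ : Real.Gamma (2 - ν) ≠ 0 := (Real.Gamma_pos_of_pos hA).ne'
  unfold gY
  rw [Finset.sum_range_succ']
  have h0 : ffact (((t+1 : ℕ) : ℝ) + 1 - ν - ((0:ℕ) : ℝ)) (1 - ν) * Efun μ ν α 0 = 0 := by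
    simp [Efun]
  rw [h0, add_zero]
  have hterm : ∀ i ∈ Finset.range (t + 1),
      ffact (((t+1 : ℕ) : ℝ) + 1 - ν - ((i+1 : ℕ) : ℝ)) (1 - ν) * Efun μ ν α (i + 1)
      = Real.Gamma (2 - ν) * (cc (2 - ν) (t - i) * Pg a α ν i) := by
    intro i hi
    have hi' : i + 1 ≤ t + 1 := by have := Finset.mem_range.mp hi; omega
    rw [ffact_g_eq hν2 hi']
    have : (t + 1) - (i + 1) = t - i := by omega
    rw [this]
    have hE : Efun μ ν α (i + 1) = Pg a α ν i := by simp [Efun, ha_def]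
    rw [hE]; ring
  rw [Finset.sum_congr rfl hterm]
  rw [← Finset.mul_sum, ← mul_assoc]
  rw [show (1 / Real.Gamma (2 - ν)) * Real.Gamma (2 - ν) = 1 by field_simp]
  rw [one_mul]
  have hswap : ∑ i ∈ Finset.range (t + 1), cc (2 - ν) (t - i) * Pg a α ν i
      = ∑' k : ℕ, ∑ i ∈ Finset.range (t + 1), cc (2 - ν) (t - i) * (α ^ k * cc ((k:ℝ)*a + ν) i) := by
    rw [Summable.tsum_finsetSum (fun i _ => (summable_cc hα ha.le (by linarith : (0:ℝ) ≤ ν) i).mul_left _)]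
    apply Finset.sum_congr rfl
    intro i hi
    rw [Pg, ← tsum_mul_left]
  rw [hswap]
  apply tsum_congr
  intro k
  have hB : 0 < (k:ℝ) * a + ν := by
    have : (0:ℝ) ≤ (k:ℝ) * a := by positivity
    linarith
  have hv := vander hA hB t
  calc ∑ i ∈ Finset.range (t + 1), cc (2 - ν) (t - i) * (α ^ k * cc ((k:ℝ)*a + ν) i)
      = α ^ k * ∑ i ∈ Finset.range (t + 1), cc ((k:ℝ)*a + ν) i * cc (2 - ν) (t - i) := by
        rw [Finset.mul_sum]
        apply Finset.sum_congr rfl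
        intro i hi; ring
    _ = α ^ k * cc ((2 - ν) + ((k:ℝ)*a + ν)) t := by rw [hv]
    _ = α ^ k * cc ((k:ℝ)*a + 2) t := by
        rw [show (2 - ν) + ((k:ℝ)*a + ν) = (k:ℝ)*a + 2 by ring]

lemma WY_Efun {μ ν α : ℝ} (hμ0 : 0 < μ) (hμ1 : μ < 1) (hν1 : 1 < ν) (hν2 : ν < 2)
    (hα : |α| < 1) (t : ℕ) :
    WY μ (Efun μ ν α) t = Pg (ν - μ) α ((ν - μ) + 1) t := by
  set a := ν - μ with ha_def
  have ha : 0 < a := by simp [ha_def]; linarith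
  have hA : 0 < 1 - μ := by linarith
  have hΓ : Real.Gamma (1 - μ) ≠ 0 := (Real.Gamma_pos_of_pos hA).ne'
  unfold WY
  have hterm : ∀ j ∈ Finset.range (t + 1),
      ffact ((t : ℝ) - μ - (j : ℝ)) (-μ) * Efun μ ν α (j + 1)
      = Real.Gamma (1 - μ) * (cc (1 - μ) (t - j) * Pg a α ν j) := by
    intro j hj
    have hj' : j ≤ t := by have := Finset.mem_range.mp hj; omega
    rw [ffact_w_eq hμ1 hj']
    have hE : Efun μ ν α (j + 1) = Pg a α ν j := by simp [Efun, ha_def]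
    rw [hE]; ring
  rw [Finset.sum_congr rfl hterm]
  rw [← Finset.mul_sum, ← mul_assoc]
  rw [show (1 / Real.Gamma (1 - μ)) * Real.Gamma (1 - μ) = 1 by field_simp]
  rw [one_mul]
  have hswap : ∑ j ∈ Finset.range (t + 1), cc (1 - μ) (t - j) * Pg a α ν j
      = ∑' k : ℕ, ∑ j ∈ Finset.range (t + 1), cc (1 - μ) (t - j) * (α ^ k * cc ((k:ℝ)*a + ν) j) := by
    rw [Summable.tsum_finsetSum (fun j _ => (summable_cc hα ha.le (by linarith : (0:ℝ) ≤ ν) j).mul_left _)]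
    apply Finset.sum_congr rfl
    intro j hj
    rw [Pg, ← tsum_mul_left]
  rw [hswap]
  apply tsum_congr
  intro k
  have hB : 0 < (k:ℝ) * a + ν := by
    have : (0:ℝ) ≤ (k:ℝ) * a := by positivity
    linarith
  have hv := vander hA hB t
  calc ∑ j ∈ Finset.range (t + 1), cc (1 - μ) (t - j) * (α ^ k * cc ((k:ℝ)*a + ν) j)
      = α ^ k * ∑ j ∈ Finset.range (t + 1), cc ((k:ℝ)*a + ν) j * cc (1 - μ) (t - j) := by
        rw [Finset.mul_sum]
        apply Finset.sum_congr rfl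
        intro j hj; ring
    _ = α ^ k * cc ((1 - μ) + ((k:ℝ)*a + ν)) t := by rw [hv]
    _ = α ^ k * cc ((k:ℝ)*a + (a + 1)) t := by
        rw [show (1 - μ) + ((k:ℝ)*a + ν) = (k:ℝ)*a + (a + 1) by rw [ha_def]; ring]

lemma Efun_homog {μ ν α : ℝ} (hμ0 : 0 < μ) (hμ1 : μ < 1) (hν1 : 1 < ν) (hν2 : ν < 2)
    (hα : |α| < 1) (t : ℕ) :
    -(gY ν (Efun μ ν α) (t + 2) - 2 * gY ν (Efun μ ν α) (t + 1) + gY ν (Efun μ ν α) t)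
      + α * (WY μ (Efun μ ν α) (t + 1) - WY μ (Efun μ ν α) t) = 0 := by
  set a := ν - μ with ha_def
  have ha : 0 < a := by simp [ha_def]; linarith
  have hwa : α * (WY μ (Efun μ ν α) (t + 1) - WY μ (Efun μ ν α) t) = Pg a α 0 (t + 1) := by
    rw [WY_Efun hμ0 hμ1 hν1 hν2 hα, WY_Efun hμ0 hμ1 hν1 hν2 hα]
    rw [Pg_sub hα ha.le ha.le t]
    exact Pg_shift hα ha.le (t + 1)
  have hga : gY ν (Efun μ ν α) (t + 2) - 2 * gY ν (Efun μ ν α) (t + 1) + gY ν (Efun μ ν α) t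
      = Pg a α 0 (t + 1) := by
    cases t with
    | zero =>
      rw [show (0:ℕ) + 2 = 1 + 1 by rfl]
      rw [gY_Efun hμ0 hμ1 hν1 hν2 hα 1, gY_Efun hμ0 hμ1 hν1 hν2 hα 0, gY_Efun_zero]
      have e1 : Pg a α ((1:ℝ) + 1) (0 + 1) - Pg a α ((1:ℝ) + 1) 0 = Pg a α 1 (0 + 1) :=
        Pg_sub hα ha.le (by norm_num) 0
      have e2 : Pg a α 2 0 = Pg a α 1 0 := Pg_zero_eq ha.le (by norm_num) (by norm_num)
      have e3 : Pg a α ((0:ℝ) + 1) (0 + 1) - Pg a α ((0:ℝ) + 1) 0 = Pg a α 0 (0 + 1) :=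
        Pg_sub hα ha.le (by norm_num) 0
      norm_num at e1 e2 e3 ⊢
      linarith
    | succ m =>
      rw [show m + 1 + 2 = (m + 2) + 1 by rfl]
      rw [gY_Efun hμ0 hμ1 hν1 hν2 hα (m+2), gY_Efun hμ0 hμ1 hν1 hν2 hα (m+1),
        gY_Efun hμ0 hμ1 hν1 hν2 hα m]
      have e1 : Pg a α ((1:ℝ) + 1) (m + 1 + 1) - Pg a α ((1:ℝ) + 1) (m + 1) = Pg a α 1 (m + 1 + 1) :=
        Pg_sub hα ha.le (by norm_num) (m + 1)
      have e2 : Pg a α ((1:ℝ) + 1) (m + 1) - Pg a α ((1:ℝ) + 1) m = Pg a α 1 (m + 1) :=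
        Pg_sub hα ha.le (by norm_num) m
      have e3 : Pg a α ((0:ℝ) + 1) (m + 1 + 1) - Pg a α ((0:ℝ) + 1) (m + 1) = Pg a α 0 (m + 1 + 1) :=
        Pg_sub hα ha.le (by norm_num) (m + 1)
      norm_num at e1 e2 e3 ⊢
      linarith
  rw [hga, hwa]
  ring

lemma Efun_val {μ ν α : ℝ} (m : ℕ) :
    Efun μ ν α (m + 1) = mittagLeffler (ν - μ) ν α (m : ℤ) := by
  unfold Efun mittagLeffler Pg
  simp only [Nat.add_sub_cancel, if_neg (Nat.succ_ne_zero m)]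
  apply tsum_congr
  intro k
  rw [ccdef, ffact]
  have h1 : ((m : ℤ) : ℝ) + (k:ℝ) * (ν - μ) + ν - 1 + 1 = (m : ℝ) + ((k:ℝ) * (ν - μ) + ν) := by
    push_cast; ring
  have h2 : ((m : ℤ) : ℝ) + (k:ℝ) * (ν - μ) + ν - 1 + 1 - ((k:ℝ) * (ν - μ) + ν - 1) = (m : ℝ) + 1 := by
    push_cast; ring
  rw [h2, h1]
  rw [mul_div_assoc, div_div]

-- congruence lemmas
lemma gY_congr {ν : ℝ} {Y Z : ℕ → ℝ} {t : ℕ} (h : ∀ j ≤ t, Y j = Z j) :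
    gY ν Y t = gY ν Z t := by
  unfold gY
  congr 1
  apply Finset.sum_congr rfl
  intro j hj
  rw [h j (by have := Finset.mem_range.mp hj; omega)]

lemma WY_congr {μ : ℝ} {Y Z : ℕ → ℝ} {t : ℕ} (h : ∀ j ≤ t + 1, Y j = Z j) :
    WY μ Y t = WY μ Z t := by
  unfold WY
  congr 1
  apply Finset.sum_congr rfl
  intro j hj
  rw [h (j+1) (by have := Finset.mem_range.mp hj; omega)]

lemma gY_split {ν : ℝ} (hν2 : ν < 2) {Y Z : ℕ → ℝ} {t : ℕ}
    (hag : ∀ j ≤ t + 1, Y j = Z j) (hZ : Z (t + 2) = 0) :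
    gY ν Y (t + 2) = gY ν Z (t + 2) + Y (t + 2) := by
  have hΓ : Real.Gamma (2 - ν) ≠ 0 := (Real.Gamma_pos_of_pos (by linarith)).ne'
  unfold gY
  conv_lhs => rw [Finset.sum_range_succ]
  conv_rhs => rw [Finset.sum_range_succ]
  have hcoef : ffact (((t + 2 : ℕ) : ℝ) + 1 - ν - ((t + 2 : ℕ) : ℝ)) (1 - ν)
      = Real.Gamma (2 - ν) := by
    rw [show ((t + 2 : ℕ) : ℝ) + 1 - ν - ((t + 2 : ℕ) : ℝ) = 1 - ν by push_cast; ring]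
    unfold ffact
    rw [show (1 - ν + 1 - (1 - ν) : ℝ) = 1 by ring, Real.Gamma_one, div_one,
      show (1 - ν + 1 : ℝ) = 2 - ν by ring]
  have hS : ∑ j ∈ Finset.range (t + 2), ffact (((t+2:ℕ) : ℝ) + 1 - ν - (j : ℝ)) (1 - ν) * Y j
      = ∑ j ∈ Finset.range (t + 2), ffact (((t+2:ℕ) : ℝ) + 1 - ν - (j : ℝ)) (1 - ν) * Z j := by
    apply Finset.sum_congr rfl
    intro j hj
    rw [hag j (by have := Finset.mem_range.mp hj; omega)]
  rw [hcoef, hZ, mul_zero, add_zero, hS, mul_add]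
  congr 1
  field_simp

lemma WY_split {μ : ℝ} (hμ1 : μ < 1) {Y Z : ℕ → ℝ} {t : ℕ}
    (hag : ∀ j ≤ t + 1, Y j = Z j) (hZ : Z (t + 2) = 0) :
    WY μ Y (t + 1) = WY μ Z (t + 1) + Y (t + 2) := by
  have hΓ : Real.Gamma (1 - μ) ≠ 0 := (Real.Gamma_pos_of_pos (by linarith)).ne'
  unfold WY
  conv_lhs => rw [Finset.sum_range_succ]
  conv_rhs => rw [Finset.sum_range_succ]
  have hcoef : ffact (((t + 1 : ℕ) : ℝ) - μ - ((t + 1 : ℕ) : ℝ)) (-μ) = Real.Gamma (1 - μ) := by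
    rw [show ((t + 1 : ℕ) : ℝ) - μ - ((t + 1 : ℕ) : ℝ) = -μ by push_cast; ring]
    unfold ffact
    rw [show (-μ + 1 - -μ : ℝ) = 1 by ring, Real.Gamma_one, div_one,
      show (-μ + 1 : ℝ) = 1 - μ by ring]
  have hS : ∑ j ∈ Finset.range (t + 1), ffact (((t+1:ℕ) : ℝ) - μ - (j : ℝ)) (-μ) * Y (j + 1)
      = ∑ j ∈ Finset.range (t + 1), ffact (((t+1:ℕ) : ℝ) - μ - (j : ℝ)) (-μ) * Z (j + 1) := by
    apply Finset.sum_congr rfl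
    intro j hj
    rw [hag (j + 1) (by have := Finset.mem_range.mp hj; omega)]
  rw [hcoef, hZ, mul_zero, add_zero, hS, mul_add]
  congr 1
  field_simp

-- linearity
lemma gY_smul (ν c : ℝ) (U : ℕ → ℝ) (t : ℕ) :
    gY ν (fun n => c * U n) t = c * gY ν U t := by
  unfold gY
  rw [show (∑ j ∈ Finset.range (t + 1), ffact ((t:ℝ)+1-ν-(j:ℝ)) (1-ν) * ((fun n => c * U n) j))
      = c * ∑ j ∈ Finset.range (t + 1), ffact ((t:ℝ)+1-ν-(j:ℝ)) (1-ν) * U j from by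
        rw [Finset.mul_sum]
        apply Finset.sum_congr rfl
        intro j hj
        simp only []
        ring]
  ring

lemma WY_smul (μ c : ℝ) (U : ℕ → ℝ) (t : ℕ) :
    WY μ (fun n => c * U n) t = c * WY μ U t := by
  unfold WY
  rw [show (∑ j ∈ Finset.range (t + 1), ffact ((t:ℝ)-μ-(j:ℝ)) (-μ) * ((fun n => c * U n) (j+1)))
      = c * ∑ j ∈ Finset.range (t + 1), ffact ((t:ℝ)-μ-(j:ℝ)) (-μ) * U (j+1) from by
        rw [Finset.mul_sum]
        apply Finset.sum_congr rfl
        intro j hj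
        simp only []
        ring]
  ring

lemma gY_sub (ν : ℝ) (U V : ℕ → ℝ) (t : ℕ) :
    gY ν (fun n => U n - V n) t = gY ν U t - gY ν V t := by
  unfold gY
  rw [← mul_sub, ← Finset.sum_sub_distrib]
  congr 1
  apply Finset.sum_congr rfl
  intro j hj; ring

lemma WY_sub (μ : ℝ) (U V : ℕ → ℝ) (t : ℕ) :
    WY μ (fun n => U n - V n) t = WY μ U t - WY μ V t := by
  unfold WY
  rw [← mul_sub, ← Finset.sum_sub_distrib]
  congr 1
  apply Finset.sum_congr rfl
  intro j hj; ring

-- the solver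
noncomputable def dstep (μ ν α : ℝ) (f : ℕ → ℝ → ℝ) (Z : ℕ → ℝ) (t : ℕ) : ℝ :=
  (f (t + 1) (Z (t + 1)) + (gY ν Z (t + 2) - 2 * gY ν Z (t + 1) + gY ν Z t)
    - α * (WY μ Z (t + 1) - WY μ Z t)) / (α - 1)

noncomputable def sseq (μ ν α : ℝ) (f : ℕ → ℝ → ℝ) (s : ℝ) : ℕ → ℕ → ℝ
  | 0 => fun i => if i = 1 then s else 0
  | n + 1 => Function.update (sseq μ ν α f s n) (n + 2) (dstep μ ν α f (sseq μ ν α f s n) n)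

noncomputable def Ysol (μ ν α : ℝ) (f : ℕ → ℝ → ℝ) (s : ℝ) (n : ℕ) : ℝ := sseq μ ν α f s n n

lemma sseq_ge (μ ν α : ℝ) (f : ℕ → ℝ → ℝ) (s : ℝ) :
    ∀ n k, n + 2 ≤ k → sseq μ ν α f s n k = 0 := by
  intro n
  induction n with
  | zero => intro k hk; simp [sseq]; omega
  | succ n ih =>
    intro k hk
    show Function.update (sseq μ ν α f s n) (n + 2) _ k = 0
    rw [Function.update_of_ne (by omega)]
    exact ih k (by omega)

lemma sseq_agree (μ ν α : ℝ) (f : ℕ → ℝ → ℝ) (s : ℝ) (n k : ℕ) (h : k ≤ n + 1) :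
    sseq μ ν α f s (n + 1) k = sseq μ ν α f s n k := by
  show Function.update (sseq μ ν α f s n) (n + 2) _ k = _
  rw [Function.update_of_ne (by omega)]

lemma Ysol_eq_sseq (μ ν α : ℝ) (f : ℕ → ℝ → ℝ) (s : ℝ) :
    ∀ n k, k ≤ n + 1 → Ysol μ ν α f s k = sseq μ ν α f s n k := by
  intro n
  induction n with
  | zero =>
    intro k hk
    interval_cases k
    · rfl
    · show sseq μ ν α f s 1 1 = sseq μ ν α f s 0 1
      exact sseq_agree μ ν α f s 0 1 le_rfl
  | succ n ih =>
    intro k hk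
    by_cases hk' : k ≤ n + 1
    · rw [sseq_agree μ ν α f s n k hk']
      exact ih k hk'
    · have : k = n + 2 := by omega
      subst this
      show sseq μ ν α f s (n + 2) (n + 2) = sseq μ ν α f s (n + 1) (n + 2)
      exact sseq_agree μ ν α f s (n + 1) (n + 2) (by omega)

lemma Ysol_zero (μ ν α : ℝ) (f : ℕ → ℝ → ℝ) (s : ℝ) : Ysol μ ν α f s 0 = 0 := by
  simp [Ysol, sseq]

lemma Ysol_one (μ ν α : ℝ) (f : ℕ → ℝ → ℝ) (s : ℝ) : Ysol μ ν α f s 1 = s := by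
  show sseq μ ν α f s 1 1 = s
  rw [sseq_agree μ ν α f s 0 1 le_rfl]
  simp [sseq]

lemma Ysol_step (μ ν α : ℝ) (f : ℕ → ℝ → ℝ) (s : ℝ) (t : ℕ) :
    Ysol μ ν α f s (t + 2) = dstep μ ν α f (sseq μ ν α f s t) t := by
  show sseq μ ν α f s (t + 2) (t + 2) = _
  rw [sseq_agree μ ν α f s (t + 1) (t + 2) (by omega)]
  show Function.update (sseq μ ν α f s t) (t + 2) _ (t + 2) = _
  rw [Function.update_self]

theorem Ysol_eqn {μ ν α : ℝ} (hμ1 : μ < 1) (hν2 : ν < 2) (hα : |α| < 1)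
    (f : ℕ → ℝ → ℝ) (s : ℝ) (t : ℕ) :
    -(gY ν (Ysol μ ν α f s) (t + 2) - 2 * gY ν (Ysol μ ν α f s) (t + 1) + gY ν (Ysol μ ν α f s) t)
      + α * (WY μ (Ysol μ ν α f s) (t + 1) - WY μ (Ysol μ ν α f s) t)
      = f (t + 1) (Ysol μ ν α f s (t + 1)) := by
  have hα1 : α - 1 ≠ 0 := by
    have := abs_lt.mp hα
    intro h; linarith [sub_eq_zero.mp h]
  set Y := Ysol μ ν α f s with hY
  set Z := sseq μ ν α f s t with hZdef
  have hag : ∀ j ≤ t + 1, Y j = Z j := fun j hj => Ysol_eq_sseq μ ν α f s t j hj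
  have hZ0 : Z (t + 2) = 0 := sseq_ge μ ν α f s t (t + 2) le_rfl
  have h1 : gY ν Y (t + 2) = gY ν Z (t + 2) + Y (t + 2) := gY_split hν2 hag hZ0
  have h2 : gY ν Y (t + 1) = gY ν Z (t + 1) := gY_congr (fun j hj => hag j hj)
  have h3 : gY ν Y t = gY ν Z t := gY_congr (fun j hj => hag j (by omega))
  have h4 : WY μ Y (t + 1) = WY μ Z (t + 1) + Y (t + 2) := WY_split hμ1 hag hZ0
  have h5 : WY μ Y t = WY μ Z t := WY_congr (fun j hj => hag j hj)
  have h6 : Y (t + 2) = dstep μ ν α f Z t := Ysol_step μ ν α f s t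
  have h7 : Y (t + 1) = Z (t + 1) := hag (t + 1) le_rfl
  rw [h1, h2, h3, h4, h5, h6, h7]
  unfold dstep
  field_simp
  ring

theorem Ysol_unique {μ ν α : ℝ} (hμ1 : μ < 1) (hν2 : ν < 2) (hα : |α| < 1)
    (f : ℕ → ℝ → ℝ) (Y : ℕ → ℝ) (hY0 : Y 0 = 0)
    (heq : ∀ t, -(gY ν Y (t + 2) - 2 * gY ν Y (t + 1) + gY ν Y t)
      + α * (WY μ Y (t + 1) - WY μ Y t) = f (t + 1) (Y (t + 1))) :
    ∀ n, Y n = Ysol μ ν α f (Y 1) n := by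
  have hα1 : α - 1 ≠ 0 := by
    have := abs_lt.mp hα
    intro h; linarith [sub_eq_zero.mp h]
  intro n
  induction n using Nat.strong_induction_on with
  | _ n ih =>
    match n with
    | 0 => rw [hY0, Ysol_zero]
    | 1 => rw [Ysol_one]
    | (t+2) =>
      set Z := sseq μ ν α f (Y 1) t with hZdef
      have hag : ∀ j ≤ t + 1, Y j = Z j := by
        intro j hj
        rw [ih j (by omega)]
        exact Ysol_eq_sseq μ ν α f (Y 1) t j hj
      have hZ0 : Z (t + 2) = 0 := sseq_ge μ ν α f (Y 1) t (t + 2) le_rfl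
      have h1 : gY ν Y (t + 2) = gY ν Z (t + 2) + Y (t + 2) := gY_split hν2 hag hZ0
      have h2 : gY ν Y (t + 1) = gY ν Z (t + 1) := gY_congr (fun j hj => hag j hj)
      have h3 : gY ν Y t = gY ν Z t := gY_congr (fun j hj => hag j (by omega))
      have h4 : WY μ Y (t + 1) = WY μ Z (t + 1) + Y (t + 2) := WY_split hμ1 hag hZ0
      have h5 : WY μ Y t = WY μ Z t := WY_congr (fun j hj => hag j hj)
      have h7 : Y (t + 1) = Z (t + 1) := hag (t + 1) le_rfl
      have heqt := heq t
      rw [h1, h2, h3, h4, h5, h7] at heqt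
      have hY2 : Y (t + 2) = dstep μ ν α f Z t := by
        unfold dstep
        rw [eq_div_iff hα1]
        linarith
      rw [hY2, Ysol_step μ ν α f (Y 1) t]

-- bounds
noncomputable def Cg (ν : ℝ) (u : ℕ) : ℝ :=
  |1 / Real.Gamma (2 - ν)| * ∑ j ∈ Finset.range (u + 1), |ffact ((u:ℝ) + 1 - ν - (j:ℝ)) (1 - ν)|

noncomputable def Cw (μ : ℝ) (u : ℕ) : ℝ :=
  |1 / Real.Gamma (1 - μ)| * ∑ j ∈ Finset.range (u + 1), |ffact ((u:ℝ) - μ - (j:ℝ)) (-μ)|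

lemma Cg_nonneg (ν : ℝ) (u : ℕ) : 0 ≤ Cg ν u := by
  unfold Cg
  apply mul_nonneg (abs_nonneg _)
  apply Finset.sum_nonneg
  intro j hj; exact abs_nonneg _

lemma Cw_nonneg (μ : ℝ) (u : ℕ) : 0 ≤ Cw μ u := by
  unfold Cw
  apply mul_nonneg (abs_nonneg _)
  apply Finset.sum_nonneg
  intro j hj; exact abs_nonneg _

lemma gY_abs {ν : ℝ} {Z : ℕ → ℝ} {B : ℝ} (hB : ∀ j, |Z j| ≤ B) (u : ℕ) :
    |gY ν Z u| ≤ Cg ν u * B := by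
  unfold gY Cg
  rw [abs_mul, mul_assoc]
  apply mul_le_mul_of_nonneg_left _ (abs_nonneg _)
  calc |∑ j ∈ Finset.range (u + 1), ffact ((u:ℝ) + 1 - ν - (j:ℝ)) (1 - ν) * Z j|
      ≤ ∑ j ∈ Finset.range (u + 1), |ffact ((u:ℝ) + 1 - ν - (j:ℝ)) (1 - ν) * Z j| :=
        Finset.abs_sum_le_sum_abs _ _
    _ ≤ ∑ j ∈ Finset.range (u + 1), |ffact ((u:ℝ) + 1 - ν - (j:ℝ)) (1 - ν)| * B := by
        apply Finset.sum_le_sum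
        intro j hj
        rw [abs_mul]
        exact mul_le_mul_of_nonneg_left (hB j) (abs_nonneg _)
    _ = (∑ j ∈ Finset.range (u + 1), |ffact ((u:ℝ) + 1 - ν - (j:ℝ)) (1 - ν)|) * B := by
        rw [Finset.sum_mul]

lemma WY_abs {μ : ℝ} {Z : ℕ → ℝ} {B : ℝ} (hB : ∀ j, |Z j| ≤ B) (u : ℕ) :
    |WY μ Z u| ≤ Cw μ u * B := by
  unfold WY Cw
  rw [abs_mul, mul_assoc]
  apply mul_le_mul_of_nonneg_left _ (abs_nonneg _)
  calc |∑ j ∈ Finset.range (u + 1), ffact ((u:ℝ) - μ - (j:ℝ)) (-μ) * Z (j + 1)|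
      ≤ ∑ j ∈ Finset.range (u + 1), |ffact ((u:ℝ) - μ - (j:ℝ)) (-μ) * Z (j + 1)| :=
        Finset.abs_sum_le_sum_abs _ _
    _ ≤ ∑ j ∈ Finset.range (u + 1), |ffact ((u:ℝ) - μ - (j:ℝ)) (-μ)| * B := by
        apply Finset.sum_le_sum
        intro j hj
        rw [abs_mul]
        exact mul_le_mul_of_nonneg_left (hB (j+1)) (abs_nonneg _)
    _ = (∑ j ∈ Finset.range (u + 1), |ffact ((u:ℝ) - μ - (j:ℝ)) (-μ)|) * B := by
        rw [Finset.sum_mul]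

theorem Ysol_bound {μ ν α : ℝ} (hα : |α| < 1) (T : ℕ) :
    ∃ K : ℝ, 0 ≤ K ∧ ∀ (f : ℕ → ℝ → ℝ) (s : ℝ) (n : ℕ), n ≤ T + 1 →
      |Ysol μ ν α f s n| ≤
        K * (|s| + ∑ t ∈ Finset.range T, |f (t + 1) (Ysol μ ν α f s (t + 1))|) := by
  have hα1 : (0:ℝ) < |α - 1| := by
    have := abs_lt.mp hα
    rw [abs_pos]
    intro h; linarith [sub_eq_zero.mp h]
  induction T with
  | zero =>
    refine ⟨1, zero_le_one, ?_⟩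
    intro f s n hn
    interval_cases n
    · rw [Ysol_zero]; simp
    · rw [Ysol_one]; simp
  | succ T ihT =>
    obtain ⟨K, hK0, hK⟩ := ihT
    set C : ℝ := Cg ν (T + 2) + 2 * Cg ν (T + 1) + Cg ν T + |α| * (Cw μ (T + 1) + Cw μ T) with hC
    have hC0 : 0 ≤ C := by
      have := Cg_nonneg ν (T + 2); have := Cg_nonneg ν (T + 1); have := Cg_nonneg ν T
      have := Cw_nonneg μ (T + 1); have := Cw_nonneg μ T
      have := abs_nonneg α
      positivity
    refine ⟨(1 + C * K) / |α - 1| + K, by positivity, ?_⟩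
    intro f s n hn
    set Φ : ℝ := |s| + ∑ t ∈ Finset.range (T + 1), |f (t + 1) (Ysol μ ν α f s (t + 1))| with hΦ
    have hΦ0 : 0 ≤ Φ := by
      apply add_nonneg (abs_nonneg _)
      apply Finset.sum_nonneg; intro t ht; exact abs_nonneg _
    have hΦT : |s| + ∑ t ∈ Finset.range T, |f (t + 1) (Ysol μ ν α f s (t + 1))| ≤ Φ := by
      rw [hΦ]
      apply add_le_add le_rfl
      apply Finset.sum_le_sum_of_subset_of_nonneg
      · exact Finset.range_subset_range.mpr (by omega)
      · intro t _ _; exact abs_nonneg _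
    have hsmall : ∀ m, m ≤ T + 1 → |Ysol μ ν α f s m| ≤ K * Φ := by
      intro m hm
      exact (hK f s m hm).trans (mul_le_mul_of_nonneg_left hΦT hK0)
    by_cases hn' : n ≤ T + 1
    · apply (hsmall n hn').trans
      apply mul_le_mul_of_nonneg_right _ hΦ0
      have : (0:ℝ) ≤ (1 + C * K) / |α - 1| := by positivity
      linarith
    · have hn2 : n = T + 2 := by omega
      subst hn2
      set Z := sseq μ ν α f s T with hZdef
      have hZb : ∀ j, |Z j| ≤ K * Φ := by
        intro j
        rw [hZdef]
        by_cases hj : j ≤ T + 1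
        · rw [← Ysol_eq_sseq μ ν α f s T j hj]
          exact hsmall j hj
        · rw [sseq_ge μ ν α f s T j (by omega)]
          simp only [abs_zero]
          positivity
      have hstep : Ysol μ ν α f s (T + 2) = dstep μ ν α f Z T := Ysol_step μ ν α f s T
      rw [hstep]
      unfold dstep
      rw [abs_div]
      rw [div_le_iff₀ hα1]
      have hfT : |f (T + 1) (Z (T + 1))| ≤ Φ := by
        have hZT : Z (T + 1) = Ysol μ ν α f s (T + 1) :=
          (Ysol_eq_sseq μ ν α f s T (T + 1) le_rfl).symm
        rw [hZT, hΦ]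
        have : |f (T + 1) (Ysol μ ν α f s (T + 1))|
            ≤ ∑ t ∈ Finset.range (T + 1), |f (t + 1) (Ysol μ ν α f s (t + 1))| := by
          apply Finset.single_le_sum (f := fun t => |f (t + 1) (Ysol μ ν α f s (t + 1))|)
            (fun t _ => abs_nonneg _)
          exact Finset.self_mem_range_succ T
        linarith [abs_nonneg s]
      have hg2 := gY_abs (ν := ν) hZb (T + 2)
      have hg1 := gY_abs (ν := ν) hZb (T + 1)
      have hg0 := gY_abs (ν := ν) hZb T
      have hw1 := WY_abs (μ := μ) hZb (T + 1)
      have hw0 := WY_abs (μ := μ) hZb T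
      have htri : |f (T + 1) (Z (T + 1)) + (gY ν Z (T + 2) - 2 * gY ν Z (T + 1) + gY ν Z T)
          - α * (WY μ Z (T + 1) - WY μ Z T)|
          ≤ |f (T + 1) (Z (T + 1))| + (|gY ν Z (T + 2)| + 2 * |gY ν Z (T + 1)| + |gY ν Z T|)
            + |α| * (|WY μ Z (T + 1)| + |WY μ Z T|) := by
        have t1 : |gY ν Z (T + 2) - 2 * gY ν Z (T + 1) + gY ν Z T|
            ≤ |gY ν Z (T + 2)| + 2 * |gY ν Z (T + 1)| + |gY ν Z T| := by
          calc |gY ν Z (T + 2) - 2 * gY ν Z (T + 1) + gY ν Z T|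
              ≤ |gY ν Z (T + 2) - 2 * gY ν Z (T + 1)| + |gY ν Z T| := abs_add_le _ _
            _ ≤ |gY ν Z (T + 2)| + |2 * gY ν Z (T + 1)| + |gY ν Z T| := by
                linarith [abs_sub (gY ν Z (T + 2)) (2 * gY ν Z (T + 1))]
            _ = |gY ν Z (T + 2)| + 2 * |gY ν Z (T + 1)| + |gY ν Z T| := by
                rw [abs_mul, abs_two]
        have t2 : |α * (WY μ Z (T + 1) - WY μ Z T)| ≤ |α| * (|WY μ Z (T + 1)| + |WY μ Z T|) := by
          rw [abs_mul]
          apply mul_le_mul_of_nonneg_left _ (abs_nonneg α)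
          exact (abs_sub _ _)
        calc |f (T + 1) (Z (T + 1)) + (gY ν Z (T + 2) - 2 * gY ν Z (T + 1) + gY ν Z T)
            - α * (WY μ Z (T + 1) - WY μ Z T)|
            ≤ |f (T + 1) (Z (T + 1)) + (gY ν Z (T + 2) - 2 * gY ν Z (T + 1) + gY ν Z T)|
              + |α * (WY μ Z (T + 1) - WY μ Z T)| := abs_sub _ _
          _ ≤ |f (T + 1) (Z (T + 1))| + |gY ν Z (T + 2) - 2 * gY ν Z (T + 1) + gY ν Z T|
              + |α * (WY μ Z (T + 1) - WY μ Z T)| := by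
                linarith [abs_add_le (f (T + 1) (Z (T + 1)))
                  (gY ν Z (T + 2) - 2 * gY ν Z (T + 1) + gY ν Z T)]
          _ ≤ _ := by linarith
      have hbig : |f (T + 1) (Z (T + 1))| + (|gY ν Z (T + 2)| + 2 * |gY ν Z (T + 1)| + |gY ν Z T|)
          + |α| * (|WY μ Z (T + 1)| + |WY μ Z T|) ≤ Φ + C * (K * Φ) := by
        have hKΦ : 0 ≤ K * Φ := by positivity
        have e1 : |α| * (|WY μ Z (T + 1)| + |WY μ Z T|)
            ≤ |α| * (Cw μ (T + 1) * (K * Φ) + Cw μ T * (K * Φ)) := by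
          apply mul_le_mul_of_nonneg_left _ (abs_nonneg α)
          linarith
        rw [hC]
        nlinarith [abs_nonneg α, Cg_nonneg ν (T+2), Cg_nonneg ν (T+1), Cg_nonneg ν T,
          Cw_nonneg μ (T+1), Cw_nonneg μ T]
      calc |f (T + 1) (Z (T + 1)) + (gY ν Z (T + 2) - 2 * gY ν Z (T + 1) + gY ν Z T)
          - α * (WY μ Z (T + 1) - WY μ Z T)|
          ≤ Φ + C * (K * Φ) := htri.trans hbig
        _ = ((1 + C * K) / |α - 1|) * Φ * |α - 1| := by
            field_simp
        _ ≤ ((1 + C * K) / |α - 1| + K) * Φ * |α - 1| := by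
            apply mul_le_mul_of_nonneg_right _ hα1.le
            apply mul_le_mul_of_nonneg_right _ hΦ0
            linarith

-- continuity
lemma sseq_continuous (μ ν α : ℝ) (f : ℕ → ℝ → ℝ) :
    ∀ n, (∀ t < n, Continuous (f (t + 1))) → ∀ k, Continuous (fun s => sseq μ ν α f s n k) := by
  intro n
  induction n with
  | zero =>
    intro _ k
    show Continuous fun s => if k = 1 then s else 0
    by_cases hk : k = 1 <;> simp only [if_pos, hk, if_neg, if_true, if_false] <;>
      first | exact continuous_id | exact continuous_const
  | succ n ih =>
    intro hf k
    have hZc : ∀ j, Continuous fun s => sseq μ ν α f s n j := ih (fun t ht => hf t (by omega))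
    have hgc : ∀ u, Continuous fun s => gY ν (sseq μ ν α f s n) u := by
      intro u
      unfold gY
      exact continuous_const.mul (continuous_finset_sum _ fun j _ => continuous_const.mul (hZc j))
    have hwc : ∀ u, Continuous fun s => WY μ (sseq μ ν α f s n) u := by
      intro u
      unfold WY
      exact continuous_const.mul
        (continuous_finset_sum _ fun j _ => continuous_const.mul (hZc (j + 1)))
    have hdc : Continuous fun s => dstep μ ν α f (sseq μ ν α f s n) n := by
      unfold dstep
      have hfc' : Continuous fun s => f (n + 1) (sseq μ ν α f s n (n + 1)) :=
        (hf n (by omega)).comp (hZc (n + 1))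
      exact ((hfc'.add (((hgc (n + 2)).sub (continuous_const.mul (hgc (n + 1)))).add
        (hgc n))).sub (continuous_const.mul ((hwc (n + 1)).sub (hwc n)))).div_const _
    show Continuous fun s =>
      Function.update (sseq μ ν α f s n) (n + 2) (dstep μ ν α f (sseq μ ν α f s n) n) k
    simp only [Function.update_apply]
    by_cases hk : k = n + 2
    · simp only [if_pos hk]
      exact hdc
    · simp only [if_neg hk]
      exact hZc k

lemma Ysol_continuous (μ ν α : ℝ) (f : ℕ → ℝ → ℝ) (N : ℕ)
    (hf : ∀ t < N, Continuous (f (t + 1))) (k : ℕ) (hk : k ≤ N + 1) :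
    Continuous fun s => Ysol μ ν α f s k := by
  have h := sseq_continuous μ ν α f N hf k
  apply h.congr
  intro s
  exact (Ysol_eq_sseq μ ν α f s N k hk).symm

set_option maxHeartbeats 1000000 in
/-- Corollary of the Leray–Schauder alternative: under (A1) `|f(j,r)| ≤ g(j)ψ(|r|)`
with `ψ` nondecreasing and `g, ψ` nonnegative, if `L/ψ(L) → +∞` as `L → ∞` (i.e. for
every `C > 0` eventually `L > C ψ(L)`), then the nonlinear implicit Dirichlet problem
has a solution `Y`; moreover, `Y` is not identically zero whenever `f(j,0) ≠ 0` for
some `j ∈ {1,…,b+2}`. -/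
theorem nonlinear_existence_corollary (μ ν α : ℝ) (b : ℕ)
    (hμ0 : 0 < μ) (hμ1 : μ < 1) (hν1 : 1 < ν) (hν2 : ν < 2) (hα : |α| < 1)
    (hml : mittagLeffler (ν - μ) ν α ((b : ℤ) + 2) ≠ 0)
    (f : ℕ → ℝ → ℝ) (hfc : ∀ j ∈ Finset.Icc 1 (b + 2), Continuous (f j))
    (ψ : ℝ → ℝ) (hψ0 : ∀ x : ℝ, 0 ≤ x → 0 ≤ ψ x) (hψmono : MonotoneOn ψ (Set.Ici 0))
    (g : ℕ → ℝ) (hg : ∀ j ∈ Finset.Icc 1 (b + 2), 0 ≤ g j)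
    (hA1 : ∀ j ∈ Finset.Icc 1 (b + 2), ∀ r : ℝ, |f j r| ≤ g j * ψ |r|)
    (hlim : ∀ C > (0 : ℝ), ∃ L₀ : ℝ, ∀ L ≥ L₀, C * ψ L < L) :
    ∃ Y : ℕ → ℝ, Y 0 = 0 ∧ Y (b + 3) = 0 ∧
      (∀ t ≤ b + 1,
        -(gY ν Y (t + 2) - 2 * gY ν Y (t + 1) + gY ν Y t)
          + α * (WY μ Y (t + 1) - WY μ Y t) = f (t + 1) (Y (t + 1))) ∧
      ((∃ j ∈ Finset.Icc 1 (b + 2), f j 0 ≠ 0) → ∃ n ≤ b + 3, Y n ≠ 0) := by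
  have hα1 : α - 1 ≠ 0 := by
    have := abs_lt.mp hα
    intro hc; linarith [sub_eq_zero.mp hc]
  -- homogeneous solution h
  set h : ℕ → ℝ := Ysol μ ν α (fun _ _ => (0:ℝ)) 1 with hhdef
  have hh0 : h 0 = 0 := Ysol_zero μ ν α (fun _ _ => (0:ℝ)) 1
  have hh1 : h 1 = 1 := Ysol_one μ ν α (fun _ _ => (0:ℝ)) 1
  have hhom : ∀ t, -(gY ν h (t + 2) - 2 * gY ν h (t + 1) + gY ν h t)
      + α * (WY μ h (t + 1) - WY μ h t) = 0 :=
    fun t => Ysol_eqn hμ1 hν2 hα (fun _ _ => (0:ℝ)) 1 t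
  -- Efun is a scalar multiple of h
  have hEeq : ∀ t, -(gY ν (Efun μ ν α) (t + 2) - 2 * gY ν (Efun μ ν α) (t + 1)
      + gY ν (Efun μ ν α) t)
      + α * (WY μ (Efun μ ν α) (t + 1) - WY μ (Efun μ ν α) t) = (0:ℝ) :=
    fun t => Efun_homog hμ0 hμ1 hν1 hν2 hα t
  have hE0 : Efun μ ν α 0 = 0 := by simp [Efun]
  have hEn := Ysol_unique hμ1 hν2 hα (fun _ _ => (0:ℝ)) (Efun μ ν α) hE0 hEeq
  have hzeqn : ∀ (s : ℝ) t,
      -(gY ν (fun n => s * h n) (t + 2) - 2 * gY ν (fun n => s * h n) (t + 1)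
        + gY ν (fun n => s * h n) t)
        + α * (WY μ (fun n => s * h n) (t + 1) - WY μ (fun n => s * h n) t) = (0:ℝ) := by
    intro s t
    rw [gY_smul, gY_smul, gY_smul, WY_smul, WY_smul]
    linear_combination s * (hhom t)
  have hsmul : ∀ (s : ℝ) n, Ysol μ ν α (fun _ _ => (0:ℝ)) s n = s * h n := by
    intro s n
    have h0 : (fun n => s * h n) 0 = 0 := by simp [hh0]
    have hu := Ysol_unique hμ1 hν2 hα (fun _ _ => (0:ℝ)) (fun n => s * h n) h0 (hzeqn s) n
    simp only [hh1, mul_one] at hu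
    exact hu.symm
  have hEval : ∀ n, Efun μ ν α n = Efun μ ν α 1 * h n := by
    intro n; rw [hEn n, hsmul]
  have hml' : Efun μ ν α (b + 3) ≠ 0 := by
    have he : Efun μ ν α (b + 2 + 1) = mittagLeffler (ν - μ) ν α ((b + 2 : ℕ) : ℤ) :=
      Efun_val (b + 2)
    rw [show b + 3 = b + 2 + 1 from rfl, he,
      show ((b + 2 : ℕ) : ℤ) = (b : ℤ) + 2 by push_cast; ring]
    exact hml
  have hhb : h (b + 3) ≠ 0 := by
    intro h0
    exact hml' (by rw [hEval (b + 3), h0, mul_zero])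
  have hb0 : 0 < |h (b + 3)| := abs_pos.mpr hhb
  -- bound machinery
  obtain ⟨K, hK0, hK⟩ := Ysol_bound (μ := μ) (ν := ν) (α := α) hα (b + 2)
  have hYeqn : ∀ (s : ℝ) t,
      -(gY ν (Ysol μ ν α f s) (t + 2) - 2 * gY ν (Ysol μ ν α f s) (t + 1)
        + gY ν (Ysol μ ν α f s) t)
        + α * (WY μ (Ysol μ ν α f s) (t + 1) - WY μ (Ysol μ ν α f s) t)
        = f (t + 1) (Ysol μ ν α f s (t + 1)) :=
    fun s t => Ysol_eqn hμ1 hν2 hα f s t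
  set F : ℝ → ℝ := fun s => ∑ t ∈ Finset.range (b + 2), |f (t + 1) (Ysol μ ν α f s (t + 1))|
    with hFdef
  have hF0 : ∀ s, 0 ≤ F s := by
    intro s
    simp only [hFdef]
    exact Finset.sum_nonneg fun t _ => abs_nonneg _
  have hD : ∀ (s : ℝ) n, n ≤ b + 3 → |Ysol μ ν α f s n - s * h n| ≤ K * F s := by
    intro s n hn
    have hY1 : Ysol μ ν α f s 1 - s * h 1 = 0 := by rw [Ysol_one, hh1]; ring
    have heqD : ∀ t,
        -(gY ν (fun m => Ysol μ ν α f s m - s * h m) (t + 2)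
            - 2 * gY ν (fun m => Ysol μ ν α f s m - s * h m) (t + 1)
            + gY ν (fun m => Ysol μ ν α f s m - s * h m) t)
          + α * (WY μ (fun m => Ysol μ ν α f s m - s * h m) (t + 1)
            - WY μ (fun m => Ysol μ ν α f s m - s * h m) t)
        = f (t + 1) (Ysol μ ν α f s (t + 1)) := by
      intro t
      rw [gY_sub ν (Ysol μ ν α f s) (fun n => s * h n) (t + 2),
        gY_sub ν (Ysol μ ν α f s) (fun n => s * h n) (t + 1),
        gY_sub ν (Ysol μ ν α f s) (fun n => s * h n) t,
        WY_sub μ (Ysol μ ν α f s) (fun n => s * h n) (t + 1),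
        WY_sub μ (Ysol μ ν α f s) (fun n => s * h n) t,
        gY_smul, gY_smul, gY_smul, WY_smul, WY_smul]
      linear_combination (hYeqn s t) - s * (hhom t)
    have hD0 : (fun m => Ysol μ ν α f s m - s * h m) 0 = 0 := by
      simp [Ysol_zero, hh0]
    have hu := Ysol_unique hμ1 hν2 hα (fun j (_ : ℝ) => f j (Ysol μ ν α f s j))
      (fun m => Ysol μ ν α f s m - s * h m) hD0 heqD n
    rw [hY1] at hu
    rw [hu]
    have hb' := hK (fun j (_ : ℝ) => f j (Ysol μ ν α f s j)) 0 n (by omega)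
    simp only [abs_zero, zero_add] at hb'
    simp only [hFdef]
    exact hb'
  -- sup-type quantities
  set A : ℝ := ∑ n ∈ Finset.range (b + 4), |h n| with hAdef
  have hAge1 : 1 ≤ A := by
    have h1 : |h 1| ≤ A := by
      simp only [hAdef]
      exact Finset.single_le_sum (fun i _ => abs_nonneg (h i))
        (Finset.mem_range.mpr (by omega))
    rwa [hh1, abs_one] at h1
  have hA0 : 0 ≤ A := by linarith
  set G : ℝ := ∑ t ∈ Finset.range (b + 2), g (t + 1) with hGdef
  have hG0 : 0 ≤ G := by
    simp only [hGdef]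
    exact Finset.sum_nonneg fun t ht => hg (t + 1)
      (Finset.mem_Icc.mpr ⟨by omega, by have := Finset.mem_range.mp ht; omega⟩)
  set KG : ℝ := ((b : ℝ) + 5) * (K * G) with hKGdef
  have hKG0 : 0 ≤ KG := by
    simp only [hKGdef]; positivity
  have hKGa : K * G ≤ KG := by
    simp only [hKGdef]
    nlinarith [mul_nonneg (show (0:ℝ) ≤ (b:ℝ) + 4 by positivity) (mul_nonneg hK0 hG0)]
  have hKGb : ((b : ℝ) + 4) * (K * G) ≤ KG := by
    simp only [hKGdef]
    nlinarith [mul_nonneg hK0 hG0]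
  set M : ℝ → ℝ := fun s => ∑ n ∈ Finset.range (b + 4), |Ysol μ ν α f s n| with hMdef
  have hM0 : ∀ s, 0 ≤ M s := by
    intro s; simp only [hMdef]
    exact Finset.sum_nonneg fun n _ => abs_nonneg _
  have hYleM : ∀ s n, n ≤ b + 3 → |Ysol μ ν α f s n| ≤ M s := by
    intro s n hn
    simp only [hMdef]
    exact Finset.single_le_sum (f := fun i => |Ysol μ ν α f s i|) (fun i _ => abs_nonneg _)
      (Finset.mem_range.mpr (by omega))
  have hFb : ∀ s, F s ≤ G * ψ (M s) := by
    intro s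
    simp only [hFdef, hGdef]
    rw [Finset.sum_mul]
    apply Finset.sum_le_sum
    intro t ht
    have hmem : t + 1 ∈ Finset.Icc 1 (b + 2) :=
      Finset.mem_Icc.mpr ⟨by omega, by have := Finset.mem_range.mp ht; omega⟩
    have h1 := hA1 (t + 1) hmem (Ysol μ ν α f s (t + 1))
    have h2 : ψ |Ysol μ ν α f s (t + 1)| ≤ ψ (M s) := by
      apply hψmono (Set.mem_Ici.mpr (abs_nonneg _)) (Set.mem_Ici.mpr (hM0 s))
      exact hYleM s (t + 1) (by have := Finset.mem_range.mp ht; omega)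
    calc |f (t + 1) (Ysol μ ν α f s (t + 1))| ≤ g (t + 1) * ψ |Ysol μ ν α f s (t + 1)| := h1
      _ ≤ g (t + 1) * ψ (M s) := mul_le_mul_of_nonneg_left h2 (hg (t + 1) hmem)
  have hMself : ∀ s, M s ≤ A * |s| + KG * ψ (M s) := by
    intro s
    have step1 : M s ≤ |s| * A + ((b : ℝ) + 4) * (K * F s) := by
      have e1 : M s ≤ ∑ n ∈ Finset.range (b + 4), (|s| * |h n| + K * F s) := by
        simp only [hMdef]
        apply Finset.sum_le_sum
        intro n hn
        have hd := hD s n (by have := Finset.mem_range.mp hn; omega)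
        have : Ysol μ ν α f s n = s * h n + (Ysol μ ν α f s n - s * h n) := by ring
        calc |Ysol μ ν α f s n| = |s * h n + (Ysol μ ν α f s n - s * h n)| := by rw [← this]
          _ ≤ |s * h n| + |Ysol μ ν α f s n - s * h n| := abs_add_le _ _
          _ ≤ |s| * |h n| + K * F s := by rw [abs_mul]; linarith
      have e2 : ∑ n ∈ Finset.range (b + 4), (|s| * |h n| + K * F s)
          = |s| * A + ((b : ℝ) + 4) * (K * F s) := by
        rw [Finset.sum_add_distrib, ← Finset.mul_sum, Finset.sum_const, Finset.card_range,
          nsmul_eq_mul, hAdef]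
        push_cast
        ring
      linarith [e1, e2.le, e2.ge]
    have q1 : K * F s ≤ K * (G * ψ (M s)) := mul_le_mul_of_nonneg_left (hFb s) hK0
    have q2 : ((b : ℝ) + 4) * (K * F s) ≤ ((b : ℝ) + 4) * (K * (G * ψ (M s))) :=
      mul_le_mul_of_nonneg_left q1 (by positivity)
    have q3 : ((b : ℝ) + 4) * (K * (G * ψ (M s))) = (((b : ℝ) + 4) * (K * G)) * ψ (M s) := by
      ring
    have q4 : (((b : ℝ) + 4) * (K * G)) * ψ (M s) ≤ KG * ψ (M s) :=
      mul_le_mul_of_nonneg_right hKGb (hψ0 _ (hM0 s))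
    have : |s| * A = A * |s| := by ring
    linarith
  obtain ⟨L₁, hL₁⟩ := hlim (2 * (KG + 1)) (by linarith)
  set L₁' : ℝ := max L₁ 0 with hL1'def
  have hM2 : ∀ s, M s ≤ max L₁' (2 * (A * |s|)) := by
    intro s
    by_cases hMs : M s ≤ L₁'
    · exact hMs.trans (le_max_left _ _)
    · push_neg at hMs
      have hge : M s ≥ L₁ := by
        have : L₁ ≤ L₁' := le_max_left _ _
        linarith
      have hlt := hL₁ (M s) hge
      have hψ0' : 0 ≤ ψ (M s) := hψ0 _ (hM0 s)
      have hhalf : KG * ψ (M s) ≤ M s / 2 := by nlinarith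
      have := hMself s
      have : M s ≤ 2 * (A * |s|) := by linarith
      exact this.trans (le_max_right _ _)
  obtain ⟨L₂, hL₂⟩ := hlim ((KG + 1) * (2 * A + 1) / |h (b + 3)| + 1) (by
    have h1 : (0:ℝ) < KG + 1 := by linarith
    have h2 : (0:ℝ) < 2 * A + 1 := by linarith
    have := div_pos (mul_pos h1 h2) hb0
    linarith)
  set S : ℝ := 1 + max L₁' (max 1 L₂) with hSdef
  have hS1 : 1 ≤ S := by
    have : (1:ℝ) ≤ max 1 L₂ := le_max_left _ _
    have : (1:ℝ) ≤ max L₁' (max 1 L₂) := this.trans (le_max_right _ _)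
    simp only [hSdef]; linarith
  have hSpos : 0 < S := by linarith
  have hSL1 : L₁' ≤ S := by
    have : L₁' ≤ max L₁' (max 1 L₂) := le_max_left _ _
    simp only [hSdef]; linarith
  have hSL2 : L₂ ≤ S := by
    have h1 : L₂ ≤ max 1 L₂ := le_max_right _ _
    have h2 : max 1 L₂ ≤ max L₁' (max 1 L₂) := le_max_right _ _
    simp only [hSdef]; linarith
  have key : ∀ s : ℝ, |s| = S → |Ysol μ ν α f s (b + 3) - s * h (b + 3)| < |h (b + 3)| * S := by
    intro s hs
    set L : ℝ := 2 * (A * S) with hLdef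
    have hLS : S ≤ L := by
      simp only [hLdef]
      nlinarith [mul_nonneg (sub_nonneg.mpr hAge1) hSpos.le]
    have hL0 : 0 ≤ L := by linarith
    have hML : M s ≤ L := by
      have h1 := hM2 s
      rw [hs] at h1
      have h2 : max L₁' (2 * (A * S)) = L := by
        simp only [hLdef]
        exact max_eq_right (by linarith)
      rw [h2] at h1
      exact h1
    have hψM : ψ (M s) ≤ ψ L :=
      hψmono (Set.mem_Ici.mpr (hM0 s)) (Set.mem_Ici.mpr hL0) hML
    have hψL0 : 0 ≤ ψ L := hψ0 L hL0
    have hC2 := hL₂ L (by linarith)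
    have e : ((KG + 1) * (2 * A + 1) / |h (b + 3)| + 1) * ψ L
        = (KG + 1) * (2 * A + 1) * ψ L / |h (b + 3)| + ψ L := by ring
    have e2 : (KG + 1) * (2 * A + 1) * ψ L / |h (b + 3)| < L := by
      rw [e] at hC2; linarith
    have e3 : (KG + 1) * (2 * A + 1) * ψ L < L * |h (b + 3)| := (div_lt_iff₀ hb0).mp e2
    have e4 : (KG + 1) * ψ L < |h (b + 3)| * S := by
      by_contra hcon
      push_neg at hcon
      have e5 : (2 * A + 1) * (|h (b + 3)| * S) ≤ (2 * A + 1) * ((KG + 1) * ψ L) :=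
        mul_le_mul_of_nonneg_left hcon (by linarith)
      rw [hLdef] at e3
      nlinarith [mul_pos hb0 hSpos]
    have c1 := hD s (b + 3) le_rfl
    have c2 : K * F s ≤ K * (G * ψ (M s)) := mul_le_mul_of_nonneg_left (hFb s) hK0
    have c3 : K * (G * ψ (M s)) ≤ KG * ψ (M s) := by
      have := mul_le_mul_of_nonneg_right hKGa (hψ0 _ (hM0 s))
      linarith [this]
    have c4 : KG * ψ (M s) ≤ KG * ψ L := mul_le_mul_of_nonneg_left hψM hKG0
    have c5 : KG * ψ L ≤ (KG + 1) * ψ L := by nlinarith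
    have c3' : K * (G * ψ (M s)) = (K * G) * ψ (M s) := by ring
    linarith
  have hcont : Continuous fun s => Ysol μ ν α f s (b + 3) := by
    apply Ysol_continuous μ ν α f (b + 2) _ (b + 3) (by omega)
    intro t ht
    exact hfc (t + 1) (Finset.mem_Icc.mpr ⟨by omega, by omega⟩)
  have hexzero : ∃ σ : ℝ, Ysol μ ν α f σ (b + 3) = 0 := by
    have kp := key S (abs_of_pos hSpos)
    have km := key (-S) (by rw [abs_neg, abs_of_pos hSpos])
    rcases lt_or_gt_of_ne hhb with hneg | hpos
    · have habs : |h (b + 3)| = -h (b + 3) := abs_of_neg hneg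
      have h1 : Ysol μ ν α f S (b + 3) < 0 := by
        have := (abs_lt.mp kp).2
        rw [habs] at this; nlinarith
      have h2 : 0 < Ysol μ ν α f (-S) (b + 3) := by
        have := (abs_lt.mp km).1
        rw [habs] at this; nlinarith
      obtain ⟨σ, hσ⟩ := intermediate_value_univ (f := fun s => Ysol μ ν α f s (b + 3))
        S (-S) hcont (Set.mem_Icc.mpr ⟨h1.le, h2.le⟩)
      exact ⟨σ, hσ⟩
    · have habs : |h (b + 3)| = h (b + 3) := abs_of_pos hpos
      have h1 : 0 < Ysol μ ν α f S (b + 3) := by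
        have := (abs_lt.mp kp).1
        rw [habs] at this; nlinarith
      have h2 : Ysol μ ν α f (-S) (b + 3) < 0 := by
        have := (abs_lt.mp km).2
        rw [habs] at this; nlinarith
      obtain ⟨σ, hσ⟩ := intermediate_value_univ (f := fun s => Ysol μ ν α f s (b + 3))
        (-S) S hcont (Set.mem_Icc.mpr ⟨h2.le, h1.le⟩)
      exact ⟨σ, hσ⟩
  obtain ⟨σ, hσ⟩ := hexzero
  refine ⟨Ysol μ ν α f σ, Ysol_zero μ ν α f σ, hσ, fun t _ => hYeqn σ t, ?_⟩
  rintro ⟨j, hjmem, hfj⟩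
  by_contra hcon
  push_neg at hcon
  obtain ⟨hj1, hj2⟩ := Finset.mem_Icc.mp hjmem
  have hjt : j = (j - 1) + 1 := by omega
  set t : ℕ := j - 1 with htdef
  have heqt := hYeqn σ t
  have hgz : ∀ u, u ≤ b + 3 → gY ν (Ysol μ ν α f σ) u = 0 := by
    intro u hu
    rw [gY_congr (Z := fun _ => (0:ℝ)) (fun i hi => hcon i (by omega))]
    simp [gY]
  have hwz : ∀ u, u + 1 ≤ b + 3 → WY μ (Ysol μ ν α f σ) u = 0 := by
    intro u hu
    rw [WY_congr (Z := fun _ => (0:ℝ)) (fun i hi => hcon i (by omega))]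
    simp [WY]
  rw [hgz (t + 2) (by omega), hgz (t + 1) (by omega), hgz t (by omega),
    hwz (t + 1) (by omega), hwz t (by omega), hcon (t + 1) (by omega)] at heqt
  rw [hjt] at hfj
  norm_num at heqt
  exact hfj heqt.symm
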